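/- arXiv:2602.13057 — 2 statements merged into one kernel-verified Lean document; each statement's English description precedes it below -/
import Mathlib

section
/- Let n ≥ 1 and let w_0, …, w_n be positive integers with gcd equal to 1 and L = lcm(w_0, …, w_n). Suppose the index set {0,…,n} is partitioned into blocks, each of size exactly 2, such that for each block {i,j} we have L ∣ w_i + w_j. If moreover no single weight w_k equals the sum w_i + w_j of some block, then w_i = 1 for all i. -/
theorem stmt_1 (n : ℕ) (hn : 1 ≤ n) (w : Fin (n + 1) → ℕ)
    (hpos : ∀ i, 0 < w i)
    (hgcd : Finset.univ.gcd w = 1)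
    (π : Fin (n + 1) → Fin (n + 1))
    (hinv : ∀ i, π (π i) = i) (hfix : ∀ i, π i ≠ i)
    (hdiv : ∀ i, Finset.univ.lcm w ∣ w i + w (π i))
    (hne : ∀ i k, w i + w (π i) ≠ w k) :
    ∀ i, w i = 1 := by
  set L := Finset.univ.lcm w with hLdef
  have hwL : ∀ i, w i ∣ L := fun i => Finset.dvd_lcm (Finset.mem_univ i)
  have hL : 0 < L := by
    have h0 := hdiv 0
    have : 0 < w 0 + w (π 0) := by have := hpos 0; omega
    exact Nat.pos_of_dvd_of_pos h0 this
  have hle : ∀ i, w i ≤ L := fun i => Nat.le_of_dvd hL (hwL i)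
  have hcases : ∀ i, w i + w (π i) = L ∨ w i + w (π i) = 2 * L := by
    intro i
    obtain ⟨c, hc⟩ := hdiv i
    have h1 := hle i
    have h2 := hle (π i)
    have h3 := hpos i
    have h4 := hpos (π i)
    have hcpos : 1 ≤ c := by
      rcases Nat.eq_zero_or_pos c with h | h
      · subst h; simp at hc; omega
      · exact h
    have hcle : c ≤ 2 := by
      by_contra h
      push_neg at h
      nlinarith
    have hc2 : c = 1 ∨ c = 2 := by omega
    rcases hc2 with h | h <;> subst h <;> omega
  have hall2 : ∀ i, w i + w (π i) = 2 * L := by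
    intro i
    rcases hcases i with h | h
    · exfalso
      -- no weight equals L
      have hnL : ∀ k, w k ≠ L := by
        intro k hk
        exact hne i k (by rw [h, hk])
      have hsum : ∀ j, w j + w (π j) = L := by
        intro j
        rcases hcases j with h' | h'
        · exact h'
        · exfalso
          have := hle j; have := hle (π j)
          have hj : w j = L := by omega
          exact hnL j hj
      have heq : ∀ j, 2 * w j = L := by
        intro j
        have hsj := hsum j
        have d1 : w j ∣ w (π j) := (Nat.dvd_add_right (dvd_refl (w j))).mp (hsj ▸ hwL j)
        have d2 : w (π j) ∣ w j := by
          have h := hwL (π j)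
          rw [← hsj] at h
          exact (Nat.dvd_add_left (dvd_refl (w (π j)))).mp h
        have : w j = w (π j) := Nat.dvd_antisymm d1 d2
        omega
      have hLd : L ∣ w 0 := by
        apply Finset.lcm_dvd
        intro j _
        have : w j = w 0 := by have := heq j; have := heq 0; omega
        rw [this]
      have := Nat.le_of_dvd (hpos 0) hLd
      have := heq 0
      have := hpos 0
      omega
    · exact h
  have hwiL : ∀ i, w i = L := by
    intro i
    have := hall2 i
    have := hle i
    have := hle (π i)
    omega
  have hL1 : L = 1 := by
    have hLg : L ∣ Finset.univ.gcd w := by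
      apply Finset.dvd_gcd
      intro j _
      rw [hwiL j]
    rw [hgcd] at hLg
    exact Nat.dvd_one.mp hLg
  intro i
  rw [hwiL i, hL1]
end

section
/- Let c_1, …, c_s be positive integers with gcd 1, and let L_1, S_1, …, L_s, S_s be positive integers such that c_i·L_i divides c_j·S_j for all i, j. Then for every prime power p^m dividing c_1 with p^m dividing c_1·L_1, there exists j ≥ 2 such that p^m divides S_j; consequently c_1 divides lcm(S_2, …, S_s), provided s ≥ 2 and L_1 ≥ 1. -/
theorem stmt_4 (s : ℕ) (hs : 2 ≤ s) (c L S : Fin s → ℕ)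
    (hc : ∀ i, 0 < c i) (hL : ∀ i, 0 < L i) (hS : ∀ i, 0 < S i)
    (hgcd : Finset.univ.gcd c = 1)
    (hdiv : ∀ i j, c i * L i ∣ c j * S j) :
    (∀ p m : ℕ, p.Prime → p ^ m ∣ c ⟨0, by omega⟩ →
      p ^ m ∣ c ⟨0, by omega⟩ * L ⟨0, by omega⟩ →
      ∃ j : Fin s, j ≠ ⟨0, by omega⟩ ∧ p ^ m ∣ S j) ∧
    c ⟨0, by omega⟩ ∣ (Finset.univ.erase (⟨0, by omega⟩ : Fin s)).lcm S := by
  set i0 : Fin s := ⟨0, by omega⟩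
  have key : ∀ p m : ℕ, p.Prime → p ^ m ∣ c i0 →
      ∃ j : Fin s, j ≠ i0 ∧ p ^ m ∣ S j := by
    intro p m hp hpm
    rcases Nat.eq_zero_or_pos m with rfl | hm
    · exact ⟨⟨1, by omega⟩, by simp [i0, Fin.ext_iff], by simp⟩
    · -- find j with p ∤ c j
      have hex : ∃ j : Fin s, ¬ p ∣ c j := by
        by_contra h
        push_neg at h
        have : p ∣ Finset.univ.gcd c := Finset.dvd_gcd fun j _ => h j
        rw [hgcd] at this
        exact hp.one_lt.ne' (Nat.eq_one_of_dvd_one this)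
      obtain ⟨j, hj⟩ := hex
      have hji0 : j ≠ i0 := by
        rintro rfl
        exact hj (dvd_trans (dvd_pow_self p hm.ne') hpm)
      refine ⟨j, hji0, ?_⟩
      have h1 : p ^ m ∣ c j * S j :=
        dvd_trans (dvd_trans hpm (dvd_mul_right _ (L i0))) (hdiv i0 j)
      have hcop : Nat.Coprime (p ^ m) (c j) :=
        Nat.Coprime.pow_left _ ((Nat.Prime.coprime_iff_not_dvd hp).2 hj)
      exact (Nat.Coprime.dvd_of_dvd_mul_left hcop h1)
  constructor
  · intro p m hp h1 _
    exact key p m hp h1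
  · rw [Nat.dvd_iff_prime_pow_dvd_dvd]
    intro p k hp hpk
    obtain ⟨j, hj, hdvd⟩ := key p k hp hpk
    exact dvd_trans hdvd (Finset.dvd_lcm (by simp [hj]))
end
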